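/- arXiv:2206.07767 — 2 statements merged into one kernel-verified Lean document; each statement's English description precedes it below -/
import Mathlib

section
/- Let D ≥ 1, let N ≥ 1, let a : Fin N → ℝ^D and b : Fin N → ℝ, and let u(x) = min over n of (‖x − a_n‖₂ + b_n) be the associated MinFunnel. Let x ∈ ℝ^D and let m be any index attaining the minimum, i.e., u(x) = ‖x − a_m‖₂ + b_m. Then u(a_m) = b_m, and consequently u(x) − u(a_m) = ‖x − a_m‖₂. -/
/-! At an active center `a m` the funnel `m` itself gives `u (a m) ≤ b m`, while for any other
funnel `n` the triangle inequality through `a m` and the minimality of `m` at `x` give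
`b m ≤ ‖x - a n‖ + b n - ‖x - a m‖ ≤ ‖a m - a n‖ + b n`. -/

variable {ι E : Type*} [SeminormedAddCommGroup E]

noncomputable def minFunnel (a : ι → E) (b : ι → ℝ) (x : E) : ℝ :=
  ⨅ n, (‖x - a n‖ + b n)

namespace minFunnel

variable [Finite ι] {a : ι → E} {b : ι → ℝ} {x : E} {m : ι}

theorem le_apply (x : E) (n : ι) : minFunnel a b x ≤ ‖x - a n‖ + b n :=
  ciInf_le (Set.finite_range _).bddBelow n

theorem apply_center_of_active (hm : minFunnel a b x = ‖x - a m‖ + b m) :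
    minFunnel a b (a m) = b m := by
  have : Nonempty ι := ⟨m⟩
  refine le_antisymm (by simpa using le_apply (a := a) (b := b) (a m) m) (le_ciInf fun n => ?_)
  have h_active : ‖x - a m‖ + b m ≤ ‖x - a n‖ + b n := hm ▸ le_apply x n
  have h_triangle : ‖x - a n‖ ≤ ‖x - a m‖ + ‖a m - a n‖ := norm_sub_le_norm_sub_add_norm_sub _ _ _
  linarith

theorem sub_apply_center_of_active (hm : minFunnel a b x = ‖x - a m‖ + b m) :
    minFunnel a b x - minFunnel a b (a m) = ‖x - a m‖ := by
  rw [apply_center_of_active hm, hm, add_sub_cancel_right]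

end minFunnel

theorem minFunnel_value_at_active_center_general
    (D : ℕ) (N : ℕ)
    (a : Fin N → EuclideanSpace ℝ (Fin D)) (b : Fin N → ℝ)
    (x : EuclideanSpace ℝ (Fin D)) (m : Fin N)
    (hm : (⨅ n : Fin N, (‖x - a n‖ + b n)) = ‖x - a m‖ + b m) :
    (⨅ n : Fin N, (‖a m - a n‖ + b n)) = b m ∧
    (⨅ n : Fin N, (‖x - a n‖ + b n)) - (⨅ n : Fin N, (‖a m - a n‖ + b n))
      = ‖x - a m‖ :=
  ⟨minFunnel.apply_center_of_active (a := a) hm, minFunnel.sub_apply_center_of_active (a := a) hm⟩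

/-- The MinFunnel value at the center of an active funnel equals its offset,
so the point and the center lie on a common transport segment. -/
theorem minFunnel_value_at_active_center
    (D : ℕ) (hD : 1 ≤ D) (N : ℕ) (hN : 1 ≤ N)
    (a : Fin N → EuclideanSpace ℝ (Fin D)) (b : Fin N → ℝ)
    (x : EuclideanSpace ℝ (Fin D)) (m : Fin N)
    (hm : (⨅ n : Fin N, (‖x - a n‖ + b n)) = ‖x - a m‖ + b m) :
    (⨅ n : Fin N, (‖a m - a n‖ + b n)) = b m ∧
    (⨅ n : Fin N, (‖x - a n‖ + b n)) - (⨅ n : Fin N, (‖a m - a n‖ + b n))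
      = ‖x - a m‖ :=
  minFunnel_value_at_active_center_general D N a b x m hm
end

section
/- Let D ≥ 1, let f : ℝ^D → ℝ be 1-Lipschitz, and let x, y ∈ ℝ^D with x ≠ y satisfy f(x) − f(y) = ‖x − y‖₂. If f is Fréchet differentiable at x, then the gradient of f at x equals (x − y)/‖x − y‖₂. -/
/-!
By the triangle inequality through any point `z` of the segment `[y, x]`, a 1-Lipschitz `f` with
`f x - f y = ‖x - y‖` must be affine with slope `1` along that segment. Hence the directional
derivative of `f` at `x` towards `x - y` is `‖x - y‖`, i.e. `⟪∇f x, x - y⟫ = ‖x - y‖`, while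
`‖∇f x‖ ≤ 1`; equality in Cauchy–Schwarz forces `∇f x` to be the unit vector along `x - y`.
-/

open Set InnerProductSpace

theorem LipschitzWith.apply_sub_smul_eq_of_sub_eq_norm {E : Type*} [SeminormedAddCommGroup E]
    [NormedSpace ℝ E] {f : E → ℝ} (hf : LipschitzWith 1 f) {x y : E}
    (hxy : f x - f y = ‖x - y‖) {t : ℝ} (ht : t ∈ Icc (0 : ℝ) 1) :
    f (x - t • (x - y)) = f x - t * ‖x - y‖ := by
  obtain ⟨ht₀, ht₁⟩ := ht
  have hlip (a b : E) : f a - f b ≤ ‖a - b‖ := by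
    simpa [Real.dist_eq, dist_eq_norm] using (le_abs_self _).trans (hf.dist_le_mul a b)
  have hnear : f x - f (x - t • (x - y)) ≤ t * ‖x - y‖ := by
    simpa [norm_smul, abs_of_nonneg ht₀] using hlip x (x - t • (x - y))
  have hfar : f (x - t • (x - y)) - f y ≤ (1 - t) * ‖x - y‖ := by
    have hsub : x - t • (x - y) - y = (1 - t) • (x - y) := by
      rw [sub_smul, one_smul]; abel
    simpa [hsub, norm_smul, abs_of_nonneg (sub_nonneg.2 ht₁)] using hlip (x - t • (x - y)) y
  linarith

theorem HasFDerivAt.apply_eq_of_forall_Icc {E : Type*} [NormedAddCommGroup E] [NormedSpace ℝ E]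
    {f : E → ℝ} {f' : E →L[ℝ] ℝ} {x v : E} {c : ℝ} (hf : HasFDerivAt f f' x)
    (hline : ∀ t ∈ Icc (0 : ℝ) 1, f (x - t • v) = f x - t * c) :
    f' v = c := by
  have hcurve : HasDerivAt (fun t : ℝ => x - t • v) (-v) 0 := by
    simpa using ((hasDerivAt_id (0 : ℝ)).smul_const v).const_sub x
  have hcomp : HasDerivAt (fun t : ℝ => f (x - t • v)) (-f' v) 0 := by
    rw [← map_neg]
    exact hf.comp_hasDerivAt_of_eq 0 hcurve (by simp)
  have haffine : HasDerivWithinAt (fun t : ℝ => f (x - t • v)) (-c) (Icc 0 1) 0 := by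
    refine HasDerivWithinAt.congr ?_ hline (by simp)
    simpa using ((hasDerivAt_mul_const c).const_sub (f x)).hasDerivWithinAt
  have hunique : UniqueDiffWithinAt ℝ (Icc (0 : ℝ) 1) 0 :=
    uniqueDiffOn_Icc zero_lt_one 0 (left_mem_Icc.2 zero_le_one)
  exact neg_injective (hunique.eq_deriv _ hcomp.hasDerivWithinAt haffine)

theorem eq_inv_norm_smul_of_norm_le_one_of_inner_eq_norm {F : Type*} [NormedAddCommGroup F]
    [InnerProductSpace ℝ F] {g w : F} (hw : w ≠ 0) (hg : ‖g‖ ≤ 1) (hgw : inner ℝ g w = ‖w‖) :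
    g = ‖w‖⁻¹ • w := by
  have hw' : 0 < ‖w‖ := norm_pos_iff.2 hw
  have hg1 : ‖g‖ = 1 := by
    have := real_inner_le_norm g w
    nlinarith
  have hcs : ‖w‖ • g = ‖g‖ • w := inner_eq_norm_mul_iff_real.1 (by rw [hgw, hg1, one_mul])
  rw [hg1, one_smul] at hcs
  exact (eq_inv_smul_iff₀ hw'.ne').2 hcs

theorem LipschitzWith.norm_gradient_le {F : Type*} [NormedAddCommGroup F] [InnerProductSpace ℝ F]
    [CompleteSpace F] {f : F → ℝ} {C : NNReal} (hf : LipschitzWith C f) (x : F) :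
    ‖gradient f x‖ ≤ C := by
  rw [← (toDual ℝ F).norm_map, toDual_gradient]
  exact norm_fderiv_le_of_lipschitz ℝ hf

theorem gradient_at_ray_upper_point_general
    (D : ℕ)
    (f : EuclideanSpace ℝ (Fin D) → ℝ) (hf : LipschitzWith 1 f)
    (x y : EuclideanSpace ℝ (Fin D)) (hne : x ≠ y)
    (hxy : f x - f y = ‖x - y‖)
    (hdiff : DifferentiableAt ℝ f x) :
    gradient f x = ‖x - y‖⁻¹ • (x - y) := by
  have hslope : fderiv ℝ f x (x - y) = ‖x - y‖ :=
    hdiff.hasFDerivAt.apply_eq_of_forall_Icc fun _ ht =>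
      hf.apply_sub_smul_eq_of_sub_eq_norm hxy ht
  refine eq_inv_norm_smul_of_norm_le_one_of_inner_eq_norm (sub_ne_zero.2 hne) ?_ ?_
  · exact_mod_cast hf.norm_gradient_le x
  · rw [inner_gradient_left, hslope]

/-- If a 1-Lipschitz function attains its Lipschitz bound between `x` and
`y ≠ x` and is differentiable at `x`, its gradient at `x` is the unit vector
from `y` to `x`. -/
theorem gradient_at_ray_upper_point
    (D : ℕ) (hD : 1 ≤ D)
    (f : EuclideanSpace ℝ (Fin D) → ℝ) (hf : LipschitzWith 1 f)
    (x y : EuclideanSpace ℝ (Fin D)) (hne : x ≠ y)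
    (hxy : f x - f y = ‖x - y‖)
    (hdiff : DifferentiableAt ℝ f x) :
    gradient f x = ‖x - y‖⁻¹ • (x - y) :=
  gradient_at_ray_upper_point_general D f hf x y hne hxy hdiff
end
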